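/- arXiv:math/0411088 — 4 statements merged into one kernel-verified Lean document; each statement's English description precedes it below -/
import Mathlib

section
/- For z₃, z₄ ∈ ℂ with |z₃|² + |z₄|² = 1, the 3×3 real matrices g₃(z₃+z₄j) = [[Re(z₃²−z₄²), Im(z₄²−z₃²), −2Re(z₃·conj(z₄))], [Im(z₃²+z₄²), Re(z₃²+z₄²), −2Im(z₃·conj(z₄))], [2Re(z₃z₄), −2Im(z₃z₄), |z₃|²−|z₄|²]] and ρ(z₃+z₄j) = [[|z₃|²−|z₄|², 2Im(z₃·conj(z₄)), 2Re(z₃·conj(z₄))], [2Im(z₃z₄), Re(z₃²+z₄²), Im(z₄²−z₃²)], [−2Re(z₃z₄), Im(z₃²+z₄²), Re(z₃²−z₄²)]] satisfy g₃(z₃+z₄j) = P₁₃ · ρ(z₃+z₄j)⁻¹ · P₁₃⁻¹, where P₁₃ is the matrix [[0,0,1],[0,1,0],[−1,0,0]]; here ρ(z₃+z₄j) is orthogonal, so its inverse equals its transpose. -/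
open Complex

/-- The matrix `g₃(z₃ + z₄·j)` of the rotation of `S²` corresponding to right
multiplication by the unit quaternion `z₃ + z₄·j` on `ℂP¹`. -/
noncomputable def g3Mat (z₃ z₄ : ℂ) : Matrix (Fin 3) (Fin 3) ℝ :=
  !![(z₃ ^ 2 - z₄ ^ 2).re, (z₄ ^ 2 - z₃ ^ 2).im, -(2 * (z₃ * (starRingEnd ℂ) z₄).re);
     (z₃ ^ 2 + z₄ ^ 2).im, (z₃ ^ 2 + z₄ ^ 2).re, -(2 * (z₃ * (starRingEnd ℂ) z₄).im);
     2 * (z₃ * z₄).re, -(2 * (z₃ * z₄).im), Complex.normSq z₃ - Complex.normSq z₄]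

/-- The matrix `ρ(z₃ + z₄·j)` of the conjugation `v ↦ q·v·q⁻¹` on pure quaternions
in the basis `(i, j, k)`. -/
noncomputable def rhoMat (z₃ z₄ : ℂ) : Matrix (Fin 3) (Fin 3) ℝ :=
  !![Complex.normSq z₃ - Complex.normSq z₄,
       2 * (z₃ * (starRingEnd ℂ) z₄).im, 2 * (z₃ * (starRingEnd ℂ) z₄).re;
     2 * (z₃ * z₄).im, (z₃ ^ 2 + z₄ ^ 2).re, (z₄ ^ 2 - z₃ ^ 2).im;
     -(2 * (z₃ * z₄).re), (z₃ ^ 2 + z₄ ^ 2).im, (z₃ ^ 2 - z₄ ^ 2).re]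

/-- The matrix `P₁₃`. -/
noncomputable def P13 : Matrix (Fin 3) (Fin 3) ℝ :=
  !![0, 0, 1; 0, 1, 0; -1, 0, 0]

/-! Writing everything in the real coordinates of `z₃` and `z₄`, the identity
`ρ(q)ᵀ ρ(q) = |q|⁴ · 1` is a polynomial identity, and conjugating by the signed permutation
matrix `P₁₃` only permutes and negates the entries of `ρ(q)ᵀ`, which yields `g₃(q)` on the nose. -/

open Matrix

theorem P13_transpose_mul_self : P13ᵀ * P13 = 1 := by
  ext i j
  fin_cases i <;> fin_cases j <;> simp [P13, mul_apply, Fin.sum_univ_three]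

theorem P13_inv : P13⁻¹ = P13ᵀ :=
  inv_eq_left_inv P13_transpose_mul_self

theorem rhoMat_transpose_mul_self (z₃ z₄ : ℂ) :
    (rhoMat z₃ z₄)ᵀ * rhoMat z₃ z₄ = (normSq z₃ + normSq z₄) ^ 2 • 1 := by
  obtain ⟨a, b⟩ := z₃
  obtain ⟨c, d⟩ := z₄
  ext i j
  fin_cases i <;> fin_cases j <;>
    simp [rhoMat, mul_apply, Fin.sum_univ_three, normSq_mk, pow_two] <;> ring

theorem g3Mat_eq_P13_mul_rhoMat_transpose_mul_P13_transpose (z₃ z₄ : ℂ) :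
    g3Mat z₃ z₄ = P13 * (rhoMat z₃ z₄)ᵀ * P13ᵀ := by
  ext i j
  fin_cases i <;> fin_cases j <;>
    simp [g3Mat, rhoMat, P13, mul_apply, vecMul, dotProduct, Fin.sum_univ_three]

/-- For a unit quaternion `z₃ + z₄·j`, the matrix `ρ(z₃+z₄j)` is orthogonal (so that its
inverse is its transpose) and `g₃(z₃+z₄j) = P₁₃ · ρ(z₃+z₄j)⁻¹ · P₁₃⁻¹`. -/
theorem g3_eq_P13_rho_inv_P13_inv (z₃ z₄ : ℂ)
    (hunit : Complex.normSq z₃ + Complex.normSq z₄ = 1) :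
    (rhoMat z₃ z₄).transpose * rhoMat z₃ z₄ = 1 ∧
    (rhoMat z₃ z₄)⁻¹ = (rhoMat z₃ z₄).transpose ∧
    g3Mat z₃ z₄ = P13 * (rhoMat z₃ z₄)⁻¹ * P13⁻¹ := by
  have horth : (rhoMat z₃ z₄)ᵀ * rhoMat z₃ z₄ = 1 := by
    rw [rhoMat_transpose_mul_self, hunit, one_pow, one_smul]
  have hinv : (rhoMat z₃ z₄)⁻¹ = (rhoMat z₃ z₄)ᵀ := inv_eq_left_inv horth
  rw [hinv, P13_inv]
  exact ⟨horth, rfl, g3Mat_eq_P13_mul_rhoMat_transpose_mul_P13_transpose z₃ z₄⟩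
end

section
/- The map ξ from the complex projective line ℂP¹ (the quotient of ℂ²∖{0} by nonzero complex scalar multiplication) to the sphere S² = {(z, h) ∈ ℂ × ℝ : |z|² + h² = 1}, defined on a nonzero vector (z₁, z₂) by ξ(z₁ : z₂) = (2z₁·conj(z₂)/(|z₁|²+|z₂|²), (|z₂|²−|z₁|²)/(|z₁|²+|z₂|²)), is well defined (independent of the representative of the line) and is a homeomorphism. Its inverse sends (z, h) to the line (z : 1+h) when h ≠ −1 and to the line (1−h : conj(z)) when h ≠ 1, and these two prescriptions agree whenever both apply. -/
open Complex

/-- The quotient topology on the complex projective line `ℂP¹`, viewed as the quotient of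
`ℂ²∖{0}` by nonzero complex scalar multiplication. -/
noncomputable instance : TopologicalSpace (Projectivization ℂ (ℂ × ℂ)) :=
  inferInstanceAs (TopologicalSpace (Quotient (projectivizationSetoid ℂ (ℂ × ℂ))))

namespace XiAux

noncomputable def fC (v : ℂ × ℂ) : ℂ × ℝ :=
  (2 * v.1 * (starRingEnd ℂ) v.2 / (((Complex.normSq v.1 + Complex.normSq v.2 : ℝ)) : ℂ),
   (Complex.normSq v.2 - Complex.normSq v.1) / (Complex.normSq v.1 + Complex.normSq v.2))

lemma npos {v : ℂ × ℂ} (hv : v ≠ 0) : 0 < normSq v.1 + normSq v.2 := by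
  rcases eq_or_ne v.1 0 with h1 | h1
  · have h2 : v.2 ≠ 0 := fun h2 => hv (Prod.ext_iff.mpr ⟨h1, h2⟩)
    have := normSq_pos.mpr h2
    have := normSq_nonneg v.1; linarith
  · have := normSq_pos.mpr h1; have := normSq_nonneg v.2; linarith

lemma normSq_two : normSq (2 : ℂ) = 4 := by
  simp [Complex.normSq_apply]; norm_num

lemma fC_mem {v : ℂ × ℂ} (hv : v ≠ 0) : normSq (fC v).1 + (fC v).2 ^ 2 = 1 := by
  have hn := npos hv
  simp only [fC, normSq_div, normSq_mul, normSq_conj, Complex.normSq_ofReal, normSq_two,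
    div_pow]
  rw [div_add_div _ _ (by positivity) (by positivity), div_eq_one_iff_eq (by positivity)]
  ring

lemma fC_smul (c : ℂ) (hc : c ≠ 0) (v : ℂ × ℂ) : fC (c • v) = fC v := by
  rcases eq_or_ne v 0 with rfl | hv
  · rw [smul_zero]
  have hn := npos hv
  have hcn : 0 < normSq c := normSq_pos.mpr hc
  have hn2 : (0:ℝ) < normSq c * normSq v.1 + normSq c * normSq v.2 := by nlinarith
  have hne : ((normSq v.1 + normSq v.2 : ℝ) : ℂ) ≠ 0 := (ofReal_ne_zero).mpr hn.ne'
  have hne2 : ((normSq c * normSq v.1 + normSq c * normSq v.2 : ℝ) : ℂ) ≠ 0 :=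
    (ofReal_ne_zero).mpr hn2.ne'
  have key : c * (starRingEnd ℂ) c = ((normSq c : ℝ) : ℂ) := Complex.mul_conj c
  refine Prod.ext ?_ ?_ <;>
    simp only [fC, Prod.smul_fst, Prod.smul_snd, smul_eq_mul, map_mul, normSq_mul]
  · rw [div_eq_div_iff hne2 hne]
    push_cast
    linear_combination (2 * v.1 * (starRingEnd ℂ) v.2 *
      ((normSq v.1 : ℂ) + (normSq v.2 : ℂ))) * key
  · rw [div_eq_div_iff hn2.ne' hn.ne']
    ring

/-- The sphere. -/
abbrev S2 := {p : ℂ × ℝ // Complex.normSq p.1 + p.2 ^ 2 = 1}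

noncomputable def F (v : { v : ℂ × ℂ // v ≠ 0 }) : S2 := ⟨fC v.1, fC_mem v.2⟩

lemma F_resp : ∀ a b : { v : ℂ × ℂ // v ≠ 0 },
    (projectivizationSetoid ℂ (ℂ × ℂ)).r a b → F a = F b := by
  rintro ⟨a, ha⟩ ⟨b, hb⟩ ⟨c, hc⟩
  simp only [F, Subtype.mk.injEq]
  have hcb : (c : ℂ) • b = a := hc
  rw [← hcb, fC_smul _ c.ne_zero]

noncomputable def e0 : Projectivization ℂ (ℂ × ℂ) → S2 := Quotient.lift F F_resp

lemma e0_mk (v : ℂ × ℂ) (hv : v ≠ 0) : e0 (Projectivization.mk ℂ v hv) = ⟨fC v, fC_mem hv⟩ :=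
  rfl

lemma contF : Continuous F := by
  have hv : Continuous fun v : { v : ℂ × ℂ // v ≠ 0 } => (v : ℂ × ℂ) := continuous_subtype_val
  have h1 : Continuous fun v : { v : ℂ × ℂ // v ≠ 0 } =>
      ((normSq v.1.1 + normSq v.1.2 : ℝ)) :=
    ((Complex.continuous_normSq.comp (continuous_fst.comp hv)).add
      (Complex.continuous_normSq.comp (continuous_snd.comp hv)))
  refine Continuous.subtype_mk ?_ _
  refine Continuous.prodMk ?_ ?_
  · refine Continuous.div ?_ (Complex.continuous_ofReal.comp h1) ?_
    · exact (continuous_const.mul (continuous_fst.comp hv)).mul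
        (Complex.continuous_conj.comp (continuous_snd.comp hv))
    · intro v
      exact (ofReal_ne_zero).mpr (npos v.2).ne'
  · exact Continuous.div
      ((Complex.continuous_normSq.comp (continuous_snd.comp hv)).sub
        (Complex.continuous_normSq.comp (continuous_fst.comp hv))) h1
      fun v => (npos v.2).ne'

lemma cont_e0 : Continuous e0 := contF.quotient_lift F_resp

lemma compactCP1 : CompactSpace (Projectivization ℂ (ℂ × ℂ)) := by
  set f : Metric.sphere (0 : ℂ × ℂ) 1 → Projectivization ℂ (ℂ × ℂ) := fun v =>
    Projectivization.mk ℂ v.1 (by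
      intro h
      have := v.2
      rw [mem_sphere_zero_iff_norm] at this
      rw [h] at this; simp at this) with hf
  have hcont : Continuous f := by
    exact continuous_quotient_mk'.comp (continuous_subtype_val.subtype_mk _)
  have hsurj : Function.Surjective f := by
    intro p
    induction p using Projectivization.ind with
    | h v hv =>
      have hvn : ‖v‖ ≠ 0 := norm_ne_zero_iff.mpr hv
      have hmem : ((‖v‖ : ℂ)⁻¹ • v) ∈ Metric.sphere (0 : ℂ × ℂ) 1 := by
        rw [mem_sphere_zero_iff_norm, norm_smul]
        simp [norm_inv, _root_.abs_of_nonneg (norm_nonneg v), hvn]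
      refine ⟨⟨_, hmem⟩, ?_⟩
      show Projectivization.mk ℂ ((‖v‖ : ℂ)⁻¹ • v) _ = Projectivization.mk ℂ v hv
      rw [Projectivization.mk_eq_mk_iff']
      exact ⟨(‖v‖ : ℂ)⁻¹, rfl⟩
  constructor
  rw [← Set.range_eq_univ.mpr hsurj]
  exact (isCompact_range hcont)

lemma ne_plus {z : ℂ} {h : ℝ} (hne : h ≠ -1) : ((z, ((1 + h : ℝ) : ℂ)) : ℂ × ℂ) ≠ 0 := by
  intro h0
  rw [Prod.ext_iff] at h0
  have h2 : ((1 + h : ℝ) : ℂ) = 0 := by simpa using h0.2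
  rw [ofReal_eq_zero] at h2
  exact hne (by linarith)

lemma ne_minus {z : ℂ} {h : ℝ} (hne : h ≠ 1) :
    (((((1 - h : ℝ)) : ℂ), (starRingEnd ℂ) z) : ℂ × ℂ) ≠ 0 := by
  intro h0
  rw [Prod.ext_iff] at h0
  have h2 : ((1 - h : ℝ) : ℂ) = 0 := by simpa using h0.1
  rw [ofReal_eq_zero] at h2
  exact hne (by linarith)

noncomputable def gC (p : S2) : Projectivization ℂ (ℂ × ℂ) :=
  if hne : p.1.2 = -1 then
    Projectivization.mk ℂ (((1 - p.1.2 : ℝ) : ℂ), (starRingEnd ℂ) p.1.1)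
      (ne_minus (by rw [hne]; norm_num))
  else
    Projectivization.mk ℂ (p.1.1, ((1 + p.1.2 : ℝ) : ℂ)) (ne_plus hne)

lemma agree (z : ℂ) (h : ℝ) (hs : Complex.normSq z + h ^ 2 = 1) (hm : h ≠ -1) (hp : h ≠ 1)
    (h1 : ((z, ((1 + h : ℝ) : ℂ)) : ℂ × ℂ) ≠ 0)
    (h2 : (((((1 - h : ℝ)) : ℂ), (starRingEnd ℂ) z) : ℂ × ℂ) ≠ 0) :
    Projectivization.mk ℂ ((z, ((1 + h : ℝ) : ℂ)) : ℂ × ℂ) h1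
      = Projectivization.mk ℂ (((((1 - h : ℝ)) : ℂ), (starRingEnd ℂ) z) : ℂ × ℂ) h2 := by
  rw [Projectivization.mk_eq_mk_iff']
  have hm0 : (1 - h : ℝ) ≠ 0 := fun hh => hp (by linarith)
  have hm0' : ((1 - h : ℝ) : ℂ) ≠ 0 := (ofReal_ne_zero).mpr hm0
  refine ⟨z / ((1 - h : ℝ) : ℂ), ?_⟩
  have key : z * (starRingEnd ℂ) z = ((normSq z : ℝ) : ℂ) := Complex.mul_conj z
  have hnz : (normSq z : ℝ) = (1 - h) * (1 + h) := by nlinarith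
  refine Prod.ext ?_ ?_
  · show z / ((1 - h : ℝ) : ℂ) * ((1 - h : ℝ) : ℂ) = z
    exact div_mul_cancel₀ z hm0'
  · show z / ((1 - h : ℝ) : ℂ) * (starRingEnd ℂ) z = ((1 + h : ℝ) : ℂ)
    rw [div_mul_eq_mul_div, key, hnz, ofReal_mul, mul_comm, mul_div_assoc,
      div_self hm0', mul_one]

lemma gC_spec_neg (p : S2) (hne : p.1.2 = -1) :
    gC p = Projectivization.mk ℂ (((1 - p.1.2 : ℝ) : ℂ), (starRingEnd ℂ) p.1.1)
      (ne_minus (by rw [hne]; norm_num)) := dif_pos hne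

lemma gC_spec_pos (p : S2) (hne : p.1.2 ≠ -1) :
    gC p = Projectivization.mk ℂ (p.1.1, ((1 + p.1.2 : ℝ) : ℂ)) (ne_plus hne) := dif_neg hne

lemma left_inv : Function.LeftInverse gC e0 := by
  intro p
  induction p using Projectivization.ind with
  | h v hv =>
    obtain ⟨z₁, z₂⟩ := v
    have hn : 0 < normSq z₁ + normSq z₂ := npos hv
    rw [e0_mk]
    by_cases hz2 : z₂ = 0
    · subst hz2
      have hz1 : z₁ ≠ 0 := by
        intro h; exact hv (Prod.ext_iff.mpr ⟨h, rfl⟩)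
      have ha := normSq_pos.mpr hz1
      have hc2 : (fC (z₁, 0)).2 = -1 := by
        simp only [fC, normSq_zero, add_zero, zero_sub, neg_div]
        rw [div_self ha.ne']
      rw [gC_spec_neg _ hc2]
      have hc1 : (fC (z₁, (0:ℂ))).1 = 0 := by
        simp [fC]
      simp only [hc1, hc2, map_zero]
      rw [Projectivization.mk_eq_mk_iff']
      refine ⟨((1 - (-1) : ℝ) : ℂ) / z₁, ?_⟩
      refine Prod.ext ?_ ?_
      · show ((1 - (-1) : ℝ) : ℂ) / z₁ * z₁ = _
        rw [div_mul_cancel₀ _ hz1]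
      · show ((1 - (-1) : ℝ) : ℂ) / z₁ * 0 = 0
        rw [mul_zero]
    · have hb := normSq_pos.mpr hz2
      have hc2 : (fC (z₁, z₂)).2 ≠ -1 := by
        intro hE
        simp only [fC] at hE
        rw [div_eq_iff hn.ne'] at hE
        nlinarith
      rw [gC_spec_pos _ hc2]
      rw [Projectivization.mk_eq_mk_iff']
      have hnC : ((normSq z₁ + normSq z₂ : ℝ) : ℂ) ≠ 0 := (ofReal_ne_zero).mpr hn.ne'
      refine ⟨2 * (starRingEnd ℂ) z₂ / ((normSq z₁ + normSq z₂ : ℝ) : ℂ), ?_⟩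
      have key : z₂ * (starRingEnd ℂ) z₂ = ((normSq z₂ : ℝ) : ℂ) := Complex.mul_conj z₂
      refine Prod.ext ?_ ?_
      · show 2 * (starRingEnd ℂ) z₂ / ((normSq z₁ + normSq z₂ : ℝ) : ℂ) * z₁ = (fC (z₁, z₂)).1
        simp only [fC]
        ring
      · show 2 * (starRingEnd ℂ) z₂ / ((normSq z₁ + normSq z₂ : ℝ) : ℂ) * z₂
            = ((1 + (fC (z₁, z₂)).2 : ℝ) : ℂ)
        simp only [fC]
        have hr : (1 + (normSq z₂ - normSq z₁) / (normSq z₁ + normSq z₂) : ℝ)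
            = 2 * normSq z₂ / (normSq z₁ + normSq z₂) := by
          field_simp; ring
        rw [hr, div_mul_eq_mul_div, mul_assoc, mul_comm ((starRingEnd ℂ) z₂) z₂, key]
        push_cast
        rfl

lemma right_inv : Function.RightInverse gC e0 := by
  rintro ⟨⟨z, h⟩, hs⟩
  have hs' : normSq z + h ^ 2 = 1 := hs
  by_cases hne : h = -1
  · subst hne
    have hz : z = 0 := by
      have : normSq z = 0 := by nlinarith [hs']
      exact normSq_eq_zero.mp this
    subst hz
    rw [gC_spec_neg _ rfl, e0_mk]
    apply Subtype.ext
    show fC (((1 - (-1:ℝ) : ℝ) : ℂ), (starRingEnd ℂ) (0:ℂ)) = ((0:ℂ), (-1:ℝ))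
    refine Prod.ext ?_ ?_ <;>
      simp [fC, Complex.normSq_ofReal] <;> norm_num
  · rw [gC_spec_pos _ hne, e0_mk]
    apply Subtype.ext
    show fC (z, ((1 + h : ℝ) : ℂ)) = (z, h)
    have hn1 : (1 + h) ≠ 0 := fun hh => hne (by linarith)
    have hnz : normSq z = (1 - h) * (1 + h) := by nlinarith
    have hden : normSq z + normSq ((1 + h : ℝ) : ℂ) = 2 * (1 + h) := by
      rw [Complex.normSq_ofReal, hnz]; ring
    refine Prod.ext ?_ ?_
    · show 2 * z * (starRingEnd ℂ) ((1 + h : ℝ) : ℂ)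
          / ((normSq z + normSq ((1 + h : ℝ) : ℂ) : ℝ) : ℂ) = z
      rw [conj_ofReal, hden]
      have h2 : ((2 * (1 + h) : ℝ) : ℂ) ≠ 0 := by
        rw [ofReal_ne_zero]; exact (by intro hh; exact hn1 (by nlinarith) : (2 * (1 + h) : ℝ) ≠ 0)
      rw [div_eq_iff h2]
      push_cast
      ring
    · show (normSq ((1 + h : ℝ) : ℂ) - normSq z) / (normSq z + normSq ((1 + h : ℝ) : ℂ)) = h
      rw [hden, Complex.normSq_ofReal, hnz, div_eq_iff (by exact (by intro hh; exact hn1 (by nlinarith) : (2 * (1 + h) : ℝ) ≠ 0))]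
      ring


noncomputable def eqv : Projectivization ℂ (ℂ × ℂ) ≃ S2 := ⟨e0, gC, left_inv, right_inv⟩

noncomputable def homeo : Projectivization ℂ (ℂ × ℂ) ≃ₜ S2 :=
  letI := compactCP1
  Continuous.homeoOfEquivCompactToT2 (f := eqv) cont_e0

lemma homeo_symm_apply (p : S2) : homeo.symm p = gC p := rfl

end XiAux

/-- The map `ξ(z₁ : z₂) = (2z₁·conj(z₂)/(|z₁|²+|z₂|²), (|z₂|²−|z₁|²)/(|z₁|²+|z₂|²))` is a
well-defined homeomorphism from `ℂP¹` onto `S² = {(z,h) ∈ ℂ × ℝ : |z|² + h² = 1}`; its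
inverse sends `(z,h)` to `(z : 1+h)` when `h ≠ −1` and to `(1−h : conj z)` when `h ≠ 1`,
and these two prescriptions agree whenever they both apply. -/
theorem xi_homeomorph_CP1_sphere :
    ∃ e : Projectivization ℂ (ℂ × ℂ) ≃ₜ {p : ℂ × ℝ // Complex.normSq p.1 + p.2 ^ 2 = 1},
      (∀ (z₁ z₂ : ℂ) (h0 : ((z₁, z₂) : ℂ × ℂ) ≠ 0),
        ((e (Projectivization.mk ℂ ((z₁, z₂) : ℂ × ℂ) h0) : ℂ × ℝ))
          = (2 * z₁ * (starRingEnd ℂ) z₂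
                / (((Complex.normSq z₁ + Complex.normSq z₂ : ℝ)) : ℂ),
             (Complex.normSq z₂ - Complex.normSq z₁)
                / (Complex.normSq z₁ + Complex.normSq z₂))) ∧
      (∀ (z : ℂ) (h : ℝ) (hs : Complex.normSq z + h ^ 2 = 1) (hne : h ≠ -1)
          (h0 : ((z, ((1 + h : ℝ) : ℂ)) : ℂ × ℂ) ≠ 0),
        e.symm ⟨(z, h), hs⟩
          = Projectivization.mk ℂ ((z, ((1 + h : ℝ) : ℂ)) : ℂ × ℂ) h0) ∧
      (∀ (z : ℂ) (h : ℝ) (hs : Complex.normSq z + h ^ 2 = 1) (hne : h ≠ 1)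
          (h0 : (((((1 - h : ℝ)) : ℂ), (starRingEnd ℂ) z) : ℂ × ℂ) ≠ 0),
        e.symm ⟨(z, h), hs⟩
          = Projectivization.mk ℂ (((((1 - h : ℝ)) : ℂ), (starRingEnd ℂ) z) : ℂ × ℂ) h0) ∧
      (∀ (z : ℂ) (h : ℝ), Complex.normSq z + h ^ 2 = 1 → h ≠ -1 → h ≠ 1 →
        ∀ (h1 : ((z, ((1 + h : ℝ) : ℂ)) : ℂ × ℂ) ≠ 0)
          (h2 : (((((1 - h : ℝ)) : ℂ), (starRingEnd ℂ) z) : ℂ × ℂ) ≠ 0),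
        Projectivization.mk ℂ ((z, ((1 + h : ℝ) : ℂ)) : ℂ × ℂ) h1
          = Projectivization.mk ℂ (((((1 - h : ℝ)) : ℂ), (starRingEnd ℂ) z) : ℂ × ℂ) h2) := by

  refine ⟨XiAux.homeo, ?_, ?_, ?_, ?_⟩
  · intro z₁ z₂ h0
    rfl
  · intro z h hs hne h0
    rw [XiAux.homeo_symm_apply, XiAux.gC_spec_pos _ hne]
  · intro z h hs hne h0
    rw [XiAux.homeo_symm_apply]
    by_cases hm : h = -1
    · rw [XiAux.gC_spec_neg _ hm]
    · rw [XiAux.gC_spec_pos _ hm]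
      exact XiAux.agree z h hs hm hne _ _
  · intro z h hs hm hp h1 h2
    exact XiAux.agree z h hs hm hp h1 h2
end

section
/- Let Φ̃ : ℂ⁴∖{0} → ℍ²∖{0} be the map (z₁, z₂, z₃, z₄) ↦ (z₁ + z₂j, z₃ + z₄j). Then: (i) Φ̃ descends to a well-defined map Φ from the complex projective space ℂP³ (the quotient of ℂ⁴∖{0} by nonzero complex scalar multiplication) to the quaternionic projective line ℍP¹ (the quotient of ℍ²∖{0} by left multiplication by nonzero quaternions); (ii) Φ is surjective; and (iii) for every L ∈ ℍP¹ and any nonzero w ∈ ℍ² representing L, the map sending the class of q ∈ ℍ∖{0} modulo left multiplication by ℂ∖{0} to the class in ℂP³ of the ℂ⁴-vector corresponding to q·w is a well-defined bijection onto the fiber Φ⁻¹(L); since (ℍ∖{0})/(ℂ∖{0}) is in bijection with ℂP¹ via z₁ + z₂j ↦ (z₁ : z₂), every fiber of Φ is in bijection with ℂP¹. -/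
open Quaternion Complex

/-- The complex number `z = a + bI` viewed as the quaternion `a + b·i`. -/
noncomputable def cq (z : ℂ) : ℍ[ℝ] := ⟨z.re, z.im, 0, 0⟩

/-- The quaternion `j`. -/
noncomputable def Qj : ℍ[ℝ] := ⟨0, 0, 1, 0⟩

/-- The identification `ℂ⁴ ≅ ℍ²`, `(z₁, z₂, z₃, z₄) ↦ (z₁ + z₂·j, z₃ + z₄·j)`. -/
noncomputable def quatPair (v : Fin 4 → ℂ) : ℍ[ℝ] × ℍ[ℝ] :=
  (cq (v 0) + cq (v 1) * Qj, cq (v 2) + cq (v 3) * Qj)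

/-- The inverse identification `ℍ² ≅ ℂ⁴`. -/
noncomputable def c4 (p : ℍ[ℝ] × ℍ[ℝ]) : Fin 4 → ℂ :=
  ![(⟨p.1.re, p.1.imI⟩ : ℂ), (⟨p.1.imJ, p.1.imK⟩ : ℂ),
    (⟨p.2.re, p.2.imI⟩ : ℂ), (⟨p.2.imJ, p.2.imK⟩ : ℂ)]

/-!
The identification `ℂ⁴ ≅ ℍ²` is a bijection that is semilinear along `ℂ ↪ ℍ`, so it maps complex
lines into quaternionic lines and induces a surjection `ℂP³ → ℍP¹`. The fibre over `[w]` is the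
set of complex lines in the quaternionic line `ℍ·w`, and `q ↦ q·w` followed by the bijection
`ℂ² ≅ ℍ`, `(z₁, z₂) ↦ z₁ + z₂j`, identifies it with `ℂP¹`.
-/

namespace Projectivization

variable {k K U V W : Type*} [DivisionRing k] [DivisionRing K]
  [AddCommGroup U] [Module k U] [AddCommGroup V] [Module k V] [AddCommGroup W] [Module K W]
  {σ : k →+* K}

theorem map_surjective (f : V →ₛₗ[σ] W) (hf : Function.Injective f)
    (hs : Function.Surjective f) : Function.Surjective (map f hf) := by
  intro x
  induction x using ind with | h w hw =>
  obtain ⟨v, rfl⟩ := hs w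
  exact ⟨mk k v (by rintro rfl; simp at hw), rfl⟩

theorem injective_of_apply_eq_smul {X : Type*} (e : X → W) {g : U →ₛₗ[σ] K}
    (hg : Function.Injective g) (b : U → X) {w : W} (hw : w ≠ 0) (heb : ∀ u, e (b u) = g u • w) :
    Function.Injective b := fun u u' h ↦
  hg (smul_left_injective K hw (by simpa only [heb] using congrArg e h))

theorem range_map_eq_preimage_map_mk (e : V →ₛₗ[σ] W) (he : Function.Injective e)
    {g : U →ₛₗ[σ] K} (hg : Function.Surjective g) (b : U →ₗ[k] V) (hb : Function.Injective b)
    {w : W} (hw : w ≠ 0) (heb : ∀ u, e (b u) = g u • w) :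
    Set.range (map b hb) = map e he ⁻¹' {mk K w hw} := by
  ext x
  constructor
  · rintro ⟨y, rfl⟩
    induction y using ind with | h u hu =>
    rw [Set.mem_preimage, Set.mem_singleton_iff, map_mk, map_mk, mk_eq_mk_iff']
    exact ⟨g u, (heb u).symm⟩
  · intro hx
    induction x using ind with | h v hv =>
    rw [Set.mem_preimage, Set.mem_singleton_iff, map_mk, mk_eq_mk_iff'] at hx
    obtain ⟨a, ha⟩ := hx
    obtain ⟨u, rfl⟩ := hg a
    have hbu : b u = v := he (by rw [heb, ha])
    have hu : u ≠ 0 := by rintro rfl; exact hv (by simpa using hbu.symm)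
    subst hbu
    exact ⟨mk k u hu, rfl⟩

end Projectivization

theorem cq_eq_coeComplex (z : ℂ) : cq z = (z : ℍ[ℝ]) := rfl

theorem cq_add_cq_mul_Qj (z₁ z₂ : ℂ) :
    cq z₁ + cq z₂ * Qj = (⟨z₁.re, z₁.im, z₂.re, z₂.im⟩ : ℍ[ℝ]) := by
  ext <;> simp only [re_add, re_mul, imI_add, imI_mul, imJ_add, imJ_mul, imK_add, imK_mul] <;>
    simp [cq, Qj]

noncomputable def quatOfPair : ℂ × ℂ →ₛₗ[ofComplex.toRingHom] ℍ[ℝ] where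
  toFun z := cq z.1 + cq z.2 * Qj
  map_add' z z' := by
    simp only [Prod.fst_add, Prod.snd_add, cq_eq_coeComplex, coeComplex_add]
    noncomm_ring
  map_smul' c z := by
    simp only [Prod.smul_fst, Prod.smul_snd, smul_eq_mul, cq_eq_coeComplex, coeComplex_mul,
      mul_add, mul_assoc]
    rfl

theorem quatOfPair_apply (z : ℂ × ℂ) : quatOfPair z = cq z.1 + cq z.2 * Qj := rfl

theorem quatOfPair_surjective : Function.Surjective quatOfPair := fun q ↦
  ⟨(⟨q.re, q.imI⟩, ⟨q.imJ, q.imK⟩), by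
    rw [quatOfPair_apply, cq_add_cq_mul_Qj]; rfl⟩

theorem quatOfPair_injective : Function.Injective quatOfPair := by
  rintro ⟨z₁, z₂⟩ ⟨u₁, u₂⟩ h
  rw [quatOfPair_apply, quatOfPair_apply, cq_add_cq_mul_Qj, cq_add_cq_mul_Qj] at h
  replace h := (QuaternionAlgebra.mk.injEq _ _ _ _ _ _ _ _).mp h
  exact Prod.ext (Complex.ext h.1 h.2.1) (Complex.ext h.2.2.1 h.2.2.2)

noncomputable def quatPairₛₗ : (Fin 4 → ℂ) →ₛₗ[ofComplex.toRingHom] ℍ[ℝ] × ℍ[ℝ] where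
  toFun := quatPair
  map_add' v v' := Prod.ext (map_add quatOfPair (v 0, v 1) (v' 0, v' 1))
    (map_add quatOfPair (v 2, v 3) (v' 2, v' 3))
  map_smul' c v := Prod.ext (map_smulₛₗ quatOfPair c (v 0, v 1))
    (map_smulₛₗ quatOfPair c (v 2, v 3))

theorem quatPairₛₗ_apply (v : Fin 4 → ℂ) : quatPairₛₗ v = quatPair v := rfl

theorem quatPair_c4 (p : ℍ[ℝ] × ℍ[ℝ]) : quatPair (c4 p) = p := by
  unfold quatPair c4
  ext <;> simp [cq_add_cq_mul_Qj]

theorem c4_quatPair (v : Fin 4 → ℂ) : c4 (quatPair v) = v := by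
  unfold quatPair c4
  funext i
  fin_cases i <;> simp [cq_add_cq_mul_Qj]

theorem quatPairₛₗ_injective : Function.Injective quatPairₛₗ :=
  Function.LeftInverse.injective c4_quatPair

theorem quatPairₛₗ_surjective : Function.Surjective quatPairₛₗ :=
  Function.RightInverse.surjective quatPair_c4

theorem c4_add (p p' : ℍ[ℝ] × ℍ[ℝ]) : c4 (p + p') = c4 p + c4 p' :=
  quatPairₛₗ_injective <| by simp only [map_add, quatPairₛₗ_apply, quatPair_c4]

theorem c4_cq_smul (c : ℂ) (p : ℍ[ℝ] × ℍ[ℝ]) : c4 (cq c • p) = c • c4 p :=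
  quatPairₛₗ_injective <| by
    rw [map_smulₛₗ, quatPairₛₗ_apply, quatPairₛₗ_apply, quatPair_c4, quatPair_c4]
    rfl

noncomputable def fiberParam (w : ℍ[ℝ] × ℍ[ℝ]) : ℂ × ℂ →ₗ[ℂ] (Fin 4 → ℂ) where
  toFun z := c4 (quatOfPair z • w)
  map_add' z z' := by simp only [map_add, add_smul, c4_add]
  map_smul' c z := by
    rw [map_smulₛₗ, smul_eq_mul, mul_smul]
    exact c4_cq_smul c _

theorem fiberParam_injective {w : ℍ[ℝ] × ℍ[ℝ]} (hw : w ≠ 0) :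
    Function.Injective (fiberParam w) :=
  Projectivization.injective_of_apply_eq_smul quatPair quatOfPair_injective _ hw
    fun _ ↦ quatPair_c4 _

/-- The map `ℂ⁴∖{0} → ℍ²∖{0}`, `(z₁,z₂,z₃,z₄) ↦ (z₁+z₂j, z₃+z₄j)`, descends to a
well-defined surjection `Φ : ℂP³ → ℍP¹`, and for every `L ∈ ℍP¹` with nonzero
representative `w ∈ ℍ²`, the map `[q] ↦ [q·w]` is a well-defined bijection from
`ℂP¹ = (ℍ∖{0})/(ℂ∖{0})` onto the fiber `Φ⁻¹(L)`. -/
theorem cp3_fibration_over_hp1 :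
    ∃ Φ : Projectivization ℂ (Fin 4 → ℂ) → Projectivization ℍ[ℝ] (ℍ[ℝ] × ℍ[ℝ]),
      (∀ (v : Fin 4 → ℂ) (hv : v ≠ 0) (hv' : quatPair v ≠ 0),
        Φ (Projectivization.mk ℂ v hv) = Projectivization.mk ℍ[ℝ] (quatPair v) hv') ∧
      Function.Surjective Φ ∧
      (∀ (L : Projectivization ℍ[ℝ] (ℍ[ℝ] × ℍ[ℝ])) (w : ℍ[ℝ] × ℍ[ℝ]) (hw : w ≠ 0),
        Projectivization.mk ℍ[ℝ] w hw = L →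
        ∃ β : Projectivization ℂ (ℂ × ℂ) → Projectivization ℂ (Fin 4 → ℂ),
          (∀ (z₁ z₂ : ℂ) (hz : ((z₁, z₂) : ℂ × ℂ) ≠ 0)
              (hc : c4 ((cq z₁ + cq z₂ * Qj) • w) ≠ 0),
            β (Projectivization.mk ℂ ((z₁, z₂) : ℂ × ℂ) hz)
              = Projectivization.mk ℂ (c4 ((cq z₁ + cq z₂ * Qj) • w)) hc) ∧
          Function.Injective β ∧
          Set.range β = Φ ⁻¹' {L}) := by
  refine ⟨Projectivization.map quatPairₛₗ quatPairₛₗ_injective, fun v hv hv' ↦ rfl,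
    Projectivization.map_surjective _ _ quatPairₛₗ_surjective, ?_⟩
  rintro _ w hw rfl
  refine ⟨Projectivization.map (fiberParam w) (fiberParam_injective hw), fun z₁ z₂ hz hc ↦ rfl,
    Projectivization.map_injective _ _,
    Projectivization.range_map_eq_preimage_map_mk _ _ quatOfPair_surjective _ _ hw
      fun _ ↦ quatPair_c4 _⟩
end

section
/- Let B be a finite set and let m, j, k ∈ B with m ≠ j and m ≠ k (j = k is allowed). Let W = (ℝ³)^B be the real vector space of maps from B to ℝ³, and define S : W → W by S(f)(ℓ) = f(ℓ) for ℓ ≠ m and S(f)(m) = f(j) + f(k) − f(m). Then S is an ℝ-linear involution of W of determinant −1; it maps the diagonal subspace Δ of constant maps to itself, restricting to the identity on Δ; and the induced linear involution of the quotient space W/Δ also has determinant −1 (it is orientation-reversing). -/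
/-!
Writing `S = id + ι ∘ φ` with `ι = Pi.single m : V → (B → V)` and `φ f = f j + f k - 2 f m`,
the Weinstein–Aronszajn identity gives `det S = det (id_V + φ ∘ ι)`, and `φ ∘ ι = -2` because
`m ≠ j, k`; hence `det S = (-1) ^ dim V = -1` for `V = ℝ³`. Since `S` fixes the diagonal
pointwise, `det S = det (S|Δ) · det (S on W/Δ) = det (S on W/Δ)`.
-/

theorem LinearMap.det_id_add_comp_comm {R M N : Type*} [CommRing R]
    [AddCommGroup M] [Module R M] [Module.Free R M] [Module.Finite R M]
    [AddCommGroup N] [Module R N] [Module.Free R N] [Module.Finite R N]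
    (f : M →ₗ[R] N) (g : N →ₗ[R] M) :
    LinearMap.det (LinearMap.id + g ∘ₗ f) = LinearMap.det (LinearMap.id + f ∘ₗ g) := by
  classical
  let bM := Module.Free.chooseBasis R M
  let bN := Module.Free.chooseBasis R N
  rw [← LinearMap.det_toMatrix bM, ← LinearMap.det_toMatrix bN, map_add, map_add,
    LinearMap.toMatrix_id, LinearMap.toMatrix_id, LinearMap.toMatrix_comp bM bN bM,
    LinearMap.toMatrix_comp bN bM bN, Matrix.det_one_add_mul_comm]

theorem Submodule.det_mapQ_eq_det_of_forall_apply_eq_self {R V : Type*} [CommRing R]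
    [AddCommGroup V] [Module R V] [Module.Finite R V] (W : Submodule R V) [Module.Free R W]
    [Module.Finite R W] [Module.Free R (V ⧸ W)] (e : V →ₗ[R] V) (he : W ≤ W.comap e) (hfix : ∀ x ∈ W, e x = x) :
    LinearMap.det (W.mapQ W e he) = LinearMap.det e := by
  have hrestrict : e.restrict he = LinearMap.id := LinearMap.ext fun x => Subtype.ext (hfix x x.2)
  rw [LinearMap.det_eq_det_mul_det W e he, hrestrict, LinearMap.det_id, one_mul]

section KontsevichSymmetry

variable {R V B : Type*} [CommRing R] [AddCommGroup V] [Module R V]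

variable (R V) in
def midpointDefect (m j k : B) : (B → V) →ₗ[R] V where
  toFun f := f j + f k - 2 • f m
  map_add' f g := by simp only [Pi.add_apply, smul_add]; abel
  map_smul' r f := by
    simp only [Pi.smul_apply, RingHom.id_apply, smul_add, smul_sub, smul_comm r (2 : ℕ)]

@[simp]
theorem midpointDefect_apply (m j k : B) (f : B → V) :
    midpointDefect R V m j k f = f j + f k - 2 • f m := rfl

variable [DecidableEq B]

variable (R V) in
def kontsevichSymmetry (m j k : B) : (B → V) →ₗ[R] (B → V) :=
  LinearMap.id + LinearMap.single R (fun _ : B => V) m ∘ₗ midpointDefect R V m j k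

variable {m j k : B}

theorem kontsevichSymmetry_apply (f : B → V) :
    kontsevichSymmetry R V m j k f = f + Pi.single m (f j + f k - 2 • f m) := rfl

theorem kontsevichSymmetry_apply_of_ne (f : B → V) {ℓ : B} (hℓ : ℓ ≠ m) :
    kontsevichSymmetry R V m j k f ℓ = f ℓ := by
  rw [kontsevichSymmetry_apply, Pi.add_apply, Pi.single_eq_of_ne hℓ, add_zero]

theorem kontsevichSymmetry_apply_self (f : B → V) :
    kontsevichSymmetry R V m j k f m = f j + f k - f m := by
  rw [kontsevichSymmetry_apply, Pi.add_apply, Pi.single_eq_same]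
  abel

theorem kontsevichSymmetry_apply_of_forall_eq (f : B → V) (hf : ∀ a b, f a = f b) :
    kontsevichSymmetry R V m j k f = f := by
  funext ℓ
  by_cases hℓ : ℓ = m
  · rw [hℓ, kontsevichSymmetry_apply_self, hf j m, hf k m, add_sub_cancel_right]
  · exact kontsevichSymmetry_apply_of_ne f hℓ

theorem kontsevichSymmetry_comp_self (hmj : m ≠ j) (hmk : m ≠ k) :
    kontsevichSymmetry R V m j k ∘ₗ kontsevichSymmetry R V m j k = LinearMap.id := by
  ext1 f
  funext ℓ
  by_cases hℓ : ℓ = m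
  · subst hℓ
    simp only [LinearMap.comp_apply, LinearMap.id_apply, kontsevichSymmetry_apply_self,
      kontsevichSymmetry_apply_of_ne f hmj.symm, kontsevichSymmetry_apply_of_ne f hmk.symm]
    abel
  · simp only [LinearMap.comp_apply, LinearMap.id_apply, kontsevichSymmetry_apply_of_ne _ hℓ]

theorem det_kontsevichSymmetry [Finite B] [Module.Free R V] [Module.Finite R V]
    (hmj : m ≠ j) (hmk : m ≠ k) :
    LinearMap.det (kontsevichSymmetry R V m j k) = (-1) ^ Module.finrank R V := by
  have hperturb : LinearMap.id + midpointDefect R V m j k ∘ₗ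
      LinearMap.single R (fun _ : B => V) m = (-1 : R) • LinearMap.id := by
    ext1 v
    simp only [LinearMap.add_apply, LinearMap.comp_apply, LinearMap.coe_single, midpointDefect_apply,
      Pi.single_eq_of_ne hmj.symm, Pi.single_eq_of_ne hmk.symm, Pi.single_eq_same,
      LinearMap.id_apply, LinearMap.smul_apply]
    module
  rw [kontsevichSymmetry, LinearMap.det_id_add_comp_comm, hperturb, LinearMap.det_smul,
    LinearMap.det_id, mul_one]

end KontsevichSymmetry

/-- Kontsevich's symmetry: for a finite set `B` and `m, j, k ∈ B` with `m ≠ j`, `m ≠ k`,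
the map `S` on `W = (ℝ³)^B` defined by `S(f)(ℓ) = f(ℓ)` for `ℓ ≠ m` and
`S(f)(m) = f(j) + f(k) − f(m)` is an `ℝ`-linear involution of determinant `−1`; it
preserves the diagonal subspace `Δ` of constant maps, restricting to the identity on it,
and the induced involution of `W/Δ` also has determinant `−1`. -/
theorem kontsevich_symmetry_det_neg_one
    (B : Type*) [Fintype B] [DecidableEq B] (m j k : B) (hmj : m ≠ j) (hmk : m ≠ k) :
    ∃ S : (B → (Fin 3 → ℝ)) →ₗ[ℝ] (B → (Fin 3 → ℝ)),
      (∀ (f : B → (Fin 3 → ℝ)) (ℓ : B), ℓ ≠ m → S f ℓ = f ℓ) ∧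
      (∀ f : B → (Fin 3 → ℝ), S f m = f j + f k - f m) ∧
      S ∘ₗ S = LinearMap.id ∧
      LinearMap.det S = -1 ∧
      (∀ f : B → (Fin 3 → ℝ), (∀ a b : B, f a = f b) → S f = f) ∧
      ∀ (Δ : Submodule ℝ (B → (Fin 3 → ℝ))),
        Δ = LinearMap.range (LinearMap.pi fun _ : B => (LinearMap.id : (Fin 3 → ℝ) →ₗ[ℝ] (Fin 3 → ℝ))) →
        ∃ hΔ : Δ ≤ Δ.comap S,
          (Submodule.mapQ Δ Δ S hΔ) ∘ₗ (Submodule.mapQ Δ Δ S hΔ) = LinearMap.id ∧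
          LinearMap.det (Submodule.mapQ Δ Δ S hΔ) = -1 := by
  let S := kontsevichSymmetry ℝ (Fin 3 → ℝ) m j k
  have hSS : S ∘ₗ S = LinearMap.id := kontsevichSymmetry_comp_self hmj hmk
  have hdet : LinearMap.det S = -1 := by
    rw [det_kontsevichSymmetry hmj hmk, Module.finrank_fin_fun]
    norm_num
  refine ⟨S, fun f _ hℓ => kontsevichSymmetry_apply_of_ne f hℓ, kontsevichSymmetry_apply_self,
    hSS, hdet, kontsevichSymmetry_apply_of_forall_eq, ?_⟩
  rintro Δ rfl
  have hfix : ∀ f ∈ LinearMap.range (LinearMap.pi fun _ : B =>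
      (LinearMap.id : (Fin 3 → ℝ) →ₗ[ℝ] (Fin 3 → ℝ))), S f = f := by
    rintro _ ⟨v, rfl⟩
    exact kontsevichSymmetry_apply_of_forall_eq _ fun _ _ => rfl
  have hΔ : _ ≤ Submodule.comap S _ := fun f hf => by
    rwa [Submodule.mem_comap, hfix f hf]
  refine ⟨hΔ, ?_, ?_⟩
  · ext f
    simp [← LinearMap.comp_apply S S, hSS]
  · rw [Submodule.det_mapQ_eq_det_of_forall_apply_eq_self _ S hΔ hfix, hdet]
end
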